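/- For all i ≥ 2 and n ≥ 2, the words f_{n-1}^[i] f_{n-2}^[i] and f_{n-2}^[i] f_{n-1}^[i] have a common prefix of length F_n^[i] − 2, where F_n^[i] = |f_n^[i]|. -/
import Mathlib


/-- The (n,i)-Fibonacci words: f_0^[i] = 0, f_1^[i] = 0^{i-1} 1, f_n^[i] = f_{n-1}^[i] f_{n-2}^[i]. -/
def genFibWord (i : ℕ) : ℕ → List ℕ
  | 0 => [0]
  | 1 => List.replicate (i - 1) 0 ++ [1]
  | n + 2 => genFibWord i (n + 1) ++ genFibWord i n

/-- The (n,i)-th generalized Fibonacci number: F_0 = 1, F_1 = i, F_n = F_{n-1} + F_{n-2}. -/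
def genFib (i : ℕ) : ℕ → ℕ
  | 0 => 1
  | 1 => i
  | n + 2 => genFib i (n + 1) + genFib i n

lemma genFib_ge_two (i : ℕ) (hi : 2 ≤ i) : ∀ n, 1 ≤ n → 2 ≤ genFib i n := by
  intro n hn
  induction n using Nat.twoStepInduction with
  | zero => omega
  | one => simpa [genFib]
  | more m ih1 _ih2 =>
    rcases Nat.eq_zero_or_pos m with h | h
    · subst h; simp [genFib]; omega
    · have := ih1 h
      simp [genFib]; omega

lemma key (i : ℕ) (hi : 2 ≤ i) : ∀ n, ∃ p a b,
    genFibWord i (n + 1) ++ genFibWord i n = p ++ [a, b] ∧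
    genFibWord i n ++ genFibWord i (n + 1) = p ++ [b, a] ∧
    p.length = genFib i (n + 2) - 2 := by
  intro n
  induction n with
  | zero =>
    refine ⟨List.replicate (i - 1) 0, 1, 0, ?_, ?_, ?_⟩
    · simp [genFibWord]
    · show [0] ++ (List.replicate (i - 1) 0 ++ [1]) = _
      have : [(0:ℕ)] ++ List.replicate (i - 1) 0 = List.replicate (i - 1) 0 ++ [0] := by
        rw [List.singleton_append, ← List.replicate_succ, List.replicate_succ']
      rw [← List.append_assoc, this, List.append_assoc]
      simp
    · simp [genFib]
  | succ m ih =>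
    obtain ⟨p, a, b, h1, h2, hl⟩ := ih
    refine ⟨genFibWord i (m + 1) ++ p, b, a, ?_, ?_, ?_⟩
    · show (genFibWord i (m + 1) ++ genFibWord i m) ++ genFibWord i (m + 1) = _
      rw [List.append_assoc, h2, ← List.append_assoc]
    · show genFibWord i (m + 1) ++ (genFibWord i (m + 1) ++ genFibWord i m) = _
      rw [h1, ← List.append_assoc]
    · have hlen : ∀ k, (genFibWord i k).length = genFib i k := by
        intro k
        induction k using Nat.twoStepInduction with
        | zero => simp [genFibWord, genFib]
        | one => simp [genFibWord, genFib]; omega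
        | more j ih1 ih2 => simp [genFibWord, genFib, ih1, ih2]
      have h2le : 2 ≤ genFib i (m + 2) := genFib_ge_two i hi _ (by omega)
      have : genFib i (m + 3) = genFib i (m + 2) + genFib i (m + 1) := by
        show genFib i (m + 1 + 2) = _; simp [genFib]
      simp [hlen, hl, this]
      omega

/-- f_{n-1}^[i] f_{n-2}^[i] and f_{n-2}^[i] f_{n-1}^[i] share a common prefix of
length F_n^[i] - 2. -/
theorem stmt_4 (i : ℕ) (hi : 2 ≤ i) (n : ℕ) (hn : 2 ≤ n) :
    (genFibWord i (n - 1) ++ genFibWord i (n - 2)).take (genFib i n - 2) =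
      (genFibWord i (n - 2) ++ genFibWord i (n - 1)).take (genFib i n - 2) := by
  obtain ⟨m, rfl⟩ : ∃ m, n = m + 2 := ⟨n - 2, by omega⟩
  obtain ⟨p, a, b, h1, h2, hl⟩ := key i hi m
  have e1 : m + 2 - 1 = m + 1 := by omega
  have e2 : m + 2 - 2 = m := by omega
  rw [e1, e2, h1, h2, ← hl, List.take_left, List.take_left]
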